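/- Let 0 < l < e, suppose p^{e−l} + 1 divides p^e − 1, and set β = (p^e − 1)/(p^{e−l} + 1); assume β > 1. Let C be a linear code of length n over R. Then there exists α = (α_1,…,α_n) ∈ R^n with every α_j a unit of R such that C^α is an l-Galois LCD code over R; in particular |C^α| = |C| and, if C ≠ {0}, d_L(C^α) = d_L(C), so C^α is equivalent to C with the same parameters. -/

import Mathlib

open scoped BigOperators

/-- The ring `R = F_q + uF_q + vF_q + uvF_q ≅ F_q^4` (componentwise operations). -/
abbrev RR (F : Type*) := Fin 4 → F

/-- The pairwise orthogonal idempotents `γ_1, γ_2, γ_3, γ_4` of `R`,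
realized as the standard idempotents of `F_q^4`. -/
def gam (F : Type*) [Field F] (i : Fin 4) : RR F := Pi.single i 1

/-- The `i`-th component code `C_i ⊆ F_q^n` of a code `C ⊆ R^n`. -/
def compCode {F : Type*} [Field F] {n : ℕ} (C : Set (Fin n → RR F)) (i : Fin 4) :
    Set (Fin n → F) :=
  {x | ∃ c ∈ C, ∀ j, c j i = x j}

/-- Euclidean dual of a code over `R`. -/
def euclDualR {F : Type*} [Field F] {n : ℕ} (C : Set (Fin n → RR F)) :
    Set (Fin n → RR F) :=
  {s | ∀ t ∈ C, ∑ j, t j * s j = 0}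

/-- `l`-Galois dual of a code over `R`; apply with `pl = p ^ l`
(the `l`-Galois inner product is `[t,s]_l = ∑ j, t j * (s j) ^ (p ^ l)`,
since `F^l(r) = r ^ (p ^ l)`). -/
def galDualR {F : Type*} [Field F] {n : ℕ} (pl : ℕ) (C : Set (Fin n → RR F)) :
    Set (Fin n → RR F) :=
  {s | ∀ t ∈ C, ∑ j, t j * s j ^ pl = 0}

/-- `l`-Galois dual of a code over the field `F = F_q`; apply with `pl = p ^ l`. -/
def galDualF {F : Type*} [Field F] {ι : Type*} [Fintype ι] (pl : ℕ) (D : Set (ι → F)) :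
    Set (ι → F) :=
  {x | ∀ c ∈ D, ∑ j, c j * x j ^ pl = 0}

/-- Lee weight of a vector over `R`: the sum of the Hamming weights of the
quadruples of `γ`-components of the coordinates. -/
def leeWt {F : Type*} [Field F] [DecidableEq F] {n : ℕ} (c : Fin n → RR F) : ℕ :=
  ∑ j, hammingNorm (c j)

/-- Minimum Lee distance of a code over `R`. -/
noncomputable def dLee {F : Type*} [Field F] [DecidableEq F] {n : ℕ} (C : Set (Fin n → RR F)) : ℕ :=
  sInf (leeWt '' {c ∈ C | c ≠ 0})

/-- Minimum Hamming distance of a code over `F_q`. -/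
noncomputable def dHam {F : Type*} [Field F] [DecidableEq F] {ι : Type*} [Fintype ι]
    (D : Set (ι → F)) : ℕ :=
  sInf (hammingNorm '' {x ∈ D | x ≠ 0})

/-- The Gray map `ρ : R^n → F_q^{4n}`. -/
def gray {F : Type*} [Field F] {n : ℕ} (c : Fin n → RR F) : Fin n × Fin 4 → F :=
  fun ji => c ji.1 ji.2

/-- The code `C^α = {(α_1 c_1, …, α_n c_n) : c ∈ C}` over `R`. -/
def scaleCode {F : Type*} [Field F] {n : ℕ} (α : Fin n → RR F)
    (C : Set (Fin n → RR F)) : Set (Fin n → RR F) :=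
  (fun c => fun j => α j * c j) '' C

/-- The code `C^a = {(a_1 c_1, …, a_n c_n) : c ∈ C}` over `F_q`. -/
def scaleCodeF {F : Type*} [Field F] {n : ℕ} (a : Fin n → F)
    (D : Set (Fin n → F)) : Set (Fin n → F) :=
  (fun c => fun j => a j * c j) '' D

/-- `P_S`: the submatrix of `P` obtained by deleting the rows and columns
indexed by `S` (its determinant is `1` when `S` is everything, since the
empty matrix has determinant `1`). -/
def minorOff {F : Type*} [Field F] {m : ℕ} (P : Matrix (Fin m) (Fin m) F)
    (S : Finset (Fin m)) : Matrix {i : Fin m // i ∉ S} {i : Fin m // i ∉ S} F :=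
  P.submatrix (fun a => (a : Fin m)) (fun a => (a : Fin m))

/-!
Since `R ≅ F_q^4` componentwise, `C^α` is `l`-Galois LCD as soon as every component code
`C_i ⊆ F_q^n`, scaled by the `γ_i`-components of `α`, is. For a code `D ⊆ F_q^n` with generator
matrix `G`, the scaled code `D^a` is `l`-Galois LCD when the Gram matrix
`G · diag(a_j ^ (p^l + 1)) · (G^(p^l))ᵀ` is invertible. Its determinant is affine in each weight
and nonzero at the indicator of an information set of `D`, so it is nonzero for some weights in
`{1, g ^ (p^l + 1)}`, i.e. for some `a ∈ {1, g}^n`. A `g ≠ 0` with `g ^ (p^l + 1) ≠ 1` exists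
because `β > 1` rules out `q - 1 ∣ p^l + 1`. Scaling by units preserves cardinality and Lee
weights.
-/

open Matrix Function

lemma ne_zero_or_ne_zero_of_mul_add_ne_zero {K : Type*} [Field K] {A B x t₀ t₁ : K}
    (hne : t₀ ≠ t₁) (hx : A * x + B ≠ 0) : A * t₀ + B ≠ 0 ∨ A * t₁ + B ≠ 0 := by
  by_contra! h
  have hA : A = 0 := by
    have : A * (t₀ - t₁) = 0 := by linear_combination h.1 - h.2
    exact (mul_eq_zero.mp this).resolve_right (sub_ne_zero.mpr hne)
  exact hx (by simpa [hA] using h.1)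

theorem exists_eq_or_eq_and_ne_zero_of_affine_update {K ι : Type*} [Field K] [Fintype ι]
    [DecidableEq ι] (f : (ι → K) → K)
    (haff : ∀ j x, ∃ A B : K, ∀ t, f (update x j t) = A * t + B)
    {x : ι → K} (hx : f x ≠ 0) {t₀ t₁ : K} (hne : t₀ ≠ t₁) :
    ∃ y, (∀ j, y j = t₀ ∨ y j = t₁) ∧ f y ≠ 0 := by
  suffices ∀ s : Finset ι, ∃ y, (∀ j ∈ s, y j = t₀ ∨ y j = t₁) ∧ f y ≠ 0 by
    simpa using this Finset.univ
  intro s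
  induction s using Finset.induction_on with
  | empty => exact ⟨x, by simp, hx⟩
  | insert j s hj ih =>
    obtain ⟨y, hys, hy⟩ := ih
    obtain ⟨A, B, hAB⟩ := haff j y
    have hyj : A * y j + B ≠ 0 := by rwa [← hAB, update_eq_self]
    have hupd : ∀ t, t = t₀ ∨ t = t₁ → f (update y j t) ≠ 0 →
        ∃ y, (∀ i ∈ insert j s, y i = t₀ ∨ y i = t₁) ∧ f y ≠ 0 := by
      refine fun t ht hft => ⟨update y j t, fun i hi => ?_, hft⟩
      rcases Finset.mem_insert.mp hi with rfl | hi
      · simpa using ht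
      · rw [update_of_ne (ne_of_mem_of_not_mem hi hj)]
        exact hys i hi
    rcases ne_zero_or_ne_zero_of_mul_add_ne_zero hne hyj with h | h
    · exact hupd t₀ (Or.inl rfl) (by rwa [hAB])
    · exact hupd t₁ (Or.inr rfl) (by rwa [hAB])

theorem Matrix.exists_det_add_smul_vecMulVec {m R : Type*} [Fintype m] [DecidableEq m]
    [CommRing R] (A : Matrix m m R) (u v : m → R) :
    ∃ a b : R, ∀ t : R, (A + t • vecMulVec u v).det = a * t + b := by
  -- Schur complement: `det (A + t • u vᵀ) = det [[A, -u], [t • vᵀ, 1]]`, linear in the last row.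
  let N : Matrix (m ⊕ Unit) (m ⊕ Unit) R := fromBlocks A (replicateCol Unit (-u)) 0 1
  let r : m ⊕ Unit → R := Sum.elim v 0
  let r' : m ⊕ Unit → R := Sum.elim 0 1
  refine ⟨(N.updateRow (Sum.inr ()) r).det, (N.updateRow (Sum.inr ()) r').det, fun t => ?_⟩
  have hN : fromBlocks A (replicateCol Unit (-u)) (replicateRow Unit (t • v)) 1 =
      N.updateRow (Sum.inr ()) (t • r + r') := by
    ext (i | i) (j | j) <;> simp [N, r, r', updateRow_apply]
  have hA : A + t • vecMulVec u v = A - replicateCol Unit (-u) * replicateRow Unit (t • v) := by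
    ext i j
    simp [vecMulVec_apply, mul_apply]
  rw [hA, ← det_fromBlocks_one₂₂, hN, det_updateRow_add, det_updateRow_smul, mul_comm]

theorem Matrix.exists_det_submatrix_ne_zero {m n K : Type*} [Fintype m] [DecidableEq m] [Fintype n]
    [Field K] (M : Matrix m n K) (hM : LinearIndependent K M.row) :
    ∃ φ : m ↪ n, (M.submatrix id φ).det ≠ 0 := by
  obtain ⟨κ, a, ha, hspan, hli⟩ := exists_linearIndependent' K M.col
  have := Fintype.ofInjective a ha
  have hcard : Fintype.card m = Fintype.card κ := by
    rw [← hM.rank_matrix, rank_eq_finrank_span_cols, ← hspan,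
      linearIndependent_iff_card_eq_finrank_span.mp hli, Set.finrank]
  let e : m ≃ κ := Fintype.equivOfCardEq hcard
  refine ⟨e.toEmbedding.trans ⟨a, ha⟩, ?_⟩
  have hcols : LinearIndependent K (M.submatrix id (e.toEmbedding.trans ⟨a, ha⟩)).col :=
    hli.comp e e.injective
  exact (isUnit_iff_isUnit_det _).mp (linearIndependent_cols_iff_isUnit.mp hcols) |>.ne_zero

/-- The Gram matrix, on the rows of `G`, of the form `(x, y) ↦ ∑ j, w j * x j * σ (y j)`. -/
def Matrix.weightedGram {m n K : Type*} [Fintype n] [DecidableEq n] [CommRing K]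
    (σ : K →+* K) (G : Matrix m n K) (w : n → K) : Matrix m m K :=
  G * diagonal w * (G.map σ)ᵀ

section WeightedGram

variable {m n K : Type*} [Fintype n] [DecidableEq n] [Field K]

lemma Matrix.weightedGram_update (σ : K →+* K) (G : Matrix m n K) (w : n → K) (j : n) (t : K) :
    weightedGram σ G (update w j t) =
      weightedGram σ G (update w j 0) + t • vecMulVec (fun r => G r j) (fun s => σ (G s j)) := by
  ext r s
  rw [weightedGram, weightedGram, add_apply, mul_apply, mul_apply]
  simp only [mul_diagonal, update_apply, mul_ite, transpose_apply, map_apply, ite_mul,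
    Finset.sum_ite, Finset.filter_eq', Finset.mem_univ, ↓reduceIte, Finset.sum_singleton, mul_zero,
    zero_mul, Finset.sum_const_zero, zero_add, smul_apply, vecMulVec_apply, smul_eq_mul]
  ring

lemma Matrix.weightedGram_indicator_range [Fintype m] (σ : K →+* K) (G : Matrix m n K)
    (φ : m ↪ n) :
    weightedGram σ G (fun j => if j ∈ Finset.univ.map φ then 1 else 0) =
      G.submatrix id φ * ((G.submatrix id φ).map σ)ᵀ := by
  ext r s
  rw [weightedGram, mul_apply, mul_apply]
  simp only [mul_diagonal, mul_ite, mul_one, mul_zero, ite_mul, zero_mul, Finset.sum_ite_mem,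
    Finset.univ_inter, Finset.sum_map, transpose_apply, map_apply, submatrix_apply, id]

lemma Matrix.weightedGram_mulVec_comp [Fintype m] (σ : K →+* K) (G : Matrix m n K) (w : n → K)
    (μ : m → K) : weightedGram σ G w *ᵥ (σ ∘ μ) = G *ᵥ fun j => w j * σ ((μ ᵥ* G) j) := by
  rw [weightedGram, ← mulVec_mulVec, ← mulVec_mulVec, mulVec_transpose]
  congr 1
  funext j
  rw [mulVec_diagonal, RingHom.map_vecMul]

theorem Matrix.exists_det_weightedGram_ne_zero [Fintype m] [DecidableEq m] (σ : K →+* K)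
    (G : Matrix m n K) (hG : LinearIndependent K G.row) {t₀ t₁ : K} (hne : t₀ ≠ t₁) :
    ∃ w, (∀ j, w j = t₀ ∨ w j = t₁) ∧ (weightedGram σ G w).det ≠ 0 := by
  obtain ⟨φ, hφ⟩ := G.exists_det_submatrix_ne_zero hG
  refine exists_eq_or_eq_and_ne_zero_of_affine_update (fun w => (weightedGram σ G w).det)
    (fun j w => ?_) (x := fun j => if j ∈ Finset.univ.map φ then 1 else 0) ?_ hne
  · obtain ⟨a, b, hab⟩ := exists_det_add_smul_vecMulVec (weightedGram σ G (update w j 0))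
      (fun r => G r j) (fun s => σ (G s j))
    exact ⟨a, b, fun t => by rw [weightedGram_update, hab]⟩
  · rw [weightedGram_indicator_range, det_mul, det_transpose, ← RingHom.mapMatrix_apply,
      ← RingHom.map_det]
    exact mul_ne_zero hφ ((map_ne_zero σ).mpr hφ)

end WeightedGram

section GaloisLCD

variable {K : Type*} [Field K] {p : ℕ} [ExpChar K p] {n : ℕ}

lemma zero_mem_galDualF (l : ℕ) {ι : Type*} [Fintype ι] (D : Set (ι → K)) :
    0 ∈ galDualF (p ^ l) D := fun c _ => by
  simp [zero_pow (pow_ne_zero l (expChar_pos K p).ne')]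

theorem scaleCodeF_inter_galDualF_eq_zero_of_det_ne_zero {m : Type*} [Fintype m] [DecidableEq m]
    (l : ℕ) (G : Matrix m (Fin n) K) (a : Fin n → K)
    (hG : (weightedGram (iterateFrobenius K p l) G fun j => a j ^ (p ^ l + 1)).det ≠ 0) :
    scaleCodeF a (Submodule.span K (Set.range G) : Set (Fin n → K)) ∩
      galDualF (p ^ l) (scaleCodeF a (Submodule.span K (Set.range G))) = {0} := by
  set σ := iterateFrobenius K p l
  refine Set.eq_singleton_iff_unique_mem.mpr
    ⟨⟨⟨0, Submodule.zero_mem _, by simp [Pi.zero_def]⟩, zero_mem_galDualF l _⟩, ?_⟩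
  rintro x ⟨⟨c, hc, rfl⟩, hx⟩
  obtain ⟨μ, rfl⟩ := (Submodule.mem_span_range_iff_exists_fun K).mp hc
  -- testing `x` against the rows `a * G r` of `D^a` puts `σ ∘ μ` in the kernel of the Gram matrix
  have hker : weightedGram σ G (fun j => a j ^ (p ^ l + 1)) *ᵥ (σ ∘ μ) = 0 := by
    funext r
    rw [weightedGram_mulVec_comp, Pi.zero_apply,
      ← hx _ ⟨G r, Submodule.subset_span ⟨r, rfl⟩, rfl⟩, vecMul_eq_sum, mulVec, dotProduct]
    refine Finset.sum_congr rfl fun j _ => ?_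
    simp only [σ, iterateFrobenius_def]
    ring
  have hμ : μ = 0 := by
    funext s
    simpa using congrFun (eq_zero_of_mulVec_eq_zero hG hker) s
  funext j
  simp [hμ]

theorem exists_scaleCodeF_inter_galDualF_eq_zero (l : ℕ) (D : Submodule K (Fin n → K)) {g : K}
    (hg₀ : g ≠ 0) (hg : g ^ (p ^ l + 1) ≠ 1) :
    ∃ a : Fin n → K, (∀ j, a j ≠ 0) ∧
      scaleCodeF a (D : Set (Fin n → K)) ∩ galDualF (p ^ l) (scaleCodeF a (D : Set (Fin n → K))) =
        {0} := by
  classical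
  let b := Module.finBasis K D
  let G : Matrix (Fin (Module.finrank K D)) (Fin n) K := fun r => b r
  have hG : LinearIndependent K G.row := b.linearIndependent.map' D.subtype D.ker_subtype
  have hD : Submodule.span K (Set.range G) = D := by
    rw [show Set.range G = D.subtype '' Set.range b from (Set.range_comp _ _),
      Submodule.span_image, b.span_eq, Submodule.map_subtype_top]
  obtain ⟨w, hw, hdet⟩ := exists_det_weightedGram_ne_zero (iterateFrobenius K p l) G hG hg.symm
  -- `a j ^ (p ^ l + 1) = w j` for `a j := if w j = 1 then 1 else g`
  refine ⟨fun j => if w j = 1 then 1 else g, fun j => by dsimp only; split_ifs <;> simp [hg₀], ?_⟩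
  rw [← hD]
  refine scaleCodeF_inter_galDualF_eq_zero_of_det_ne_zero l G _ ?_
  convert hdet using 3
  funext j
  rcases hw j with h | h <;> split_ifs <;> simp_all

end GaloisLCD

theorem not_pow_sub_one_dvd_pow_add_one {p e l : ℕ} (hle : l ≤ e)
    (hdvd : p ^ (e - l) + 1 ∣ p ^ e - 1) (hβ : 1 < (p ^ e - 1) / (p ^ (e - l) + 1)) :
    ¬ p ^ e - 1 ∣ p ^ l + 1 := by
  intro h
  have hq : p ^ e - 1 ≠ 0 := fun h0 => by simp [h0] at hβ
  have hmul : (p ^ l + 1) * p ^ (e - l) = (p ^ e - 1) + (p ^ (e - l) + 1) := by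
    rw [add_mul, one_mul, ← pow_add, Nat.add_sub_cancel' hle]
    omega
  have h' : p ^ e - 1 ∣ p ^ (e - l) + 1 :=
    (Nat.dvd_add_right dvd_rfl).mp (hmul ▸ h.mul_right _)
  rw [Nat.dvd_antisymm hdvd h', Nat.div_self (Nat.pos_of_ne_zero hq)] at hβ
  exact lt_irrefl 1 hβ

theorem FiniteField.exists_ne_zero_pow_ne_one {K : Type*} [Field K] [Fintype K] {m : ℕ}
    (h : ¬ Fintype.card K - 1 ∣ m) : ∃ g : K, g ≠ 0 ∧ g ^ m ≠ 1 := by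
  obtain ⟨x, hx⟩ := not_forall.mp (mt (FiniteField.forall_pow_eq_one_iff K m).mp h)
  exact ⟨x, x.ne_zero, fun h => hx (Units.ext (by simpa using h))⟩

section UnitScaling

variable {F : Type*} [Field F] {n : ℕ} {α : Fin n → RR F}

lemma scale_zero (α : Fin n → RR F) : (fun j => α j * (0 : Fin n → RR F) j) = 0 :=
  funext fun j => mul_zero (α j)

lemma scale_injective (hα : ∀ j, IsUnit (α j)) :
    Injective fun (c : Fin n → RR F) j => α j * c j :=
  fun _ _ h => funext fun j => (hα j).mul_left_cancel (congrFun h j)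

theorem card_scaleCode (hα : ∀ j, IsUnit (α j)) (C : Set (Fin n → RR F)) :
    Nat.card (scaleCode α C) = Nat.card C :=
  Nat.card_image_of_injective (scale_injective hα) C

lemma leeWt_scale [DecidableEq F] (hα : ∀ j, IsUnit (α j)) (c : Fin n → RR F) :
    leeWt (fun j => α j * c j) = leeWt c :=
  Finset.sum_congr rfl fun j _ => hammingNorm_comp (fun i x => α j i * x)
    (fun i => mul_right_injective₀ ((hα j).apply i).ne_zero) (fun _ => mul_zero _)

theorem dLee_scaleCode [DecidableEq F] (hα : ∀ j, IsUnit (α j)) (C : Set (Fin n → RR F)) :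
    dLee (scaleCode α C) = dLee C := by
  have hnz : {c ∈ scaleCode α C | c ≠ 0} = (fun c j => α j * c j) '' {c ∈ C | c ≠ 0} := by
    ext x
    constructor
    · rintro ⟨⟨c, hc, rfl⟩, hx⟩
      exact ⟨c, ⟨hc, fun h => hx (h ▸ scale_zero α)⟩, rfl⟩
    · rintro ⟨c, ⟨hc, hc0⟩, rfl⟩
      exact ⟨⟨c, hc, rfl⟩, fun h => hc0 (scale_injective hα (h.trans (scale_zero α).symm))⟩
  rw [dLee, dLee, hnz, Set.image_image]
  simp only [leeWt_scale hα]

end UnitScaling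

section Components

variable {F : Type*} [Field F] {n : ℕ}

def compMap (i : Fin 4) : (Fin n → RR F) →ₗ[F] (Fin n → F) where
  toFun c j := c j i
  map_add' _ _ := rfl
  map_smul' _ _ := rfl

/-- The `i`-th component code `compCode C i`, as an `F`-subspace. -/
def compSubmodule (C : Submodule (RR F) (Fin n → RR F)) (i : Fin 4) : Submodule F (Fin n → F) :=
  (C.restrictScalars F).map (compMap i)

lemma mem_compSubmodule {C : Submodule (RR F) (Fin n → RR F)} {i : Fin 4} {y : Fin n → F} :
    y ∈ compSubmodule C i ↔ ∃ c ∈ C, (fun j => c j i) = y := by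
  simp [compSubmodule, compMap]

theorem scaleCode_inter_galDualR_eq_zero {pl : ℕ} (hpl : pl ≠ 0)
    (C : Submodule (RR F) (Fin n → RR F)) (α : Fin n → RR F)
    (hα : ∀ i, scaleCodeF (fun j => α j i) (compSubmodule C i : Set (Fin n → F)) ∩
      galDualF pl (scaleCodeF (fun j => α j i) (compSubmodule C i : Set (Fin n → F))) = {0}) :
    scaleCode α (C : Set (Fin n → RR F)) ∩ galDualR pl (scaleCode α (C : Set (Fin n → RR F))) =
      {0} := by
  refine Set.eq_singleton_iff_unique_mem.mpr
    ⟨⟨⟨0, C.zero_mem, scale_zero α⟩, fun t _ => by simp [zero_pow hpl]⟩, ?_⟩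
  rintro x ⟨⟨c, hc, rfl⟩, hx⟩
  funext j i
  -- multiplication in `R` is componentwise, so the `γ_i`-component of `[t, x]_l` is the
  -- `l`-Galois inner product of the `i`-th components
  have hxi : (fun j => α j i * c j i) ∈ scaleCodeF (fun j => α j i) (compSubmodule C i) ∩
      galDualF pl (scaleCodeF (fun j => α j i) (compSubmodule C i)) := by
    refine ⟨⟨_, mem_compSubmodule.mpr ⟨c, hc, rfl⟩, rfl⟩, ?_⟩
    rintro _ ⟨_, hy, rfl⟩
    obtain ⟨c', hc', rfl⟩ := mem_compSubmodule.mp hy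
    simpa [Finset.sum_apply] using congrFun (hx _ ⟨c', hc', rfl⟩) i
  rw [hα i] at hxi
  exact congrFun hxi j

end Components

theorem statement16_general {p e l n : ℕ} (hp : p.Prime) (hle : l < e)
    (F : Type*) [Field F] [Fintype F] [DecidableEq F] (hcard : Fintype.card F = p ^ e)
    (hdvd : p ^ (e - l) + 1 ∣ p ^ e - 1)
    (β : ℕ) (hβ : β = (p ^ e - 1) / (p ^ (e - l) + 1)) (hβ1 : 1 < β)
    (C : Submodule (RR F) (Fin n → RR F)) :
    ∃ α : Fin n → RR F, (∀ j, IsUnit (α j)) ∧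
      scaleCode α (C : Set (Fin n → RR F)) ∩
        galDualR (p ^ l) (scaleCode α (C : Set (Fin n → RR F))) = {0} ∧
      Nat.card (scaleCode α (C : Set (Fin n → RR F))) = Nat.card C ∧
      ((C : Set (Fin n → RR F)) ≠ {0} →
        dLee (scaleCode α (C : Set (Fin n → RR F))) = dLee (C : Set (Fin n → RR F))) := by
  have := Fact.mk hp
  have : CharP F p := charP_of_card_eq_prime_pow hcard
  have : ExpChar F p := .prime hp
  obtain ⟨g, hg₀, hg⟩ := FiniteField.exists_ne_zero_pow_ne_one (K := F) (m := p ^ l + 1)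
    (hcard ▸ not_pow_sub_one_dvd_pow_add_one hle.le hdvd (hβ ▸ hβ1))
  choose a ha₀ ha using fun i =>
    exists_scaleCodeF_inter_galDualF_eq_zero l (compSubmodule C i) hg₀ hg
  let α : Fin n → RR F := fun j i => a i j
  have hα : ∀ j, IsUnit (α j) := fun j => Pi.isUnit_iff.mpr fun i => (ha₀ i j).isUnit
  exact ⟨α, hα, scaleCode_inter_galDualR_eq_zero (pow_ne_zero l hp.ne_zero) C α ha,
    card_scaleCode hα C, fun _ => dLee_scaleCode hα C⟩

/-- for `0 < l < e` with `p^{e−l} + 1 ∣ p^e − 1` and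
`β = (p^e − 1)/(p^{e−l} + 1) > 1`, every linear code `C` over `R` is equivalent
(via scaling by a vector of units) to an `l`-Galois LCD code `C^α` with the same
cardinality and the same minimum Lee distance. -/
theorem statement16 {p e l n : ℕ} (hp : p.Prime) (hl0 : 0 < l) (hle : l < e)
    (F : Type*) [Field F] [Fintype F] [DecidableEq F] (hcard : Fintype.card F = p ^ e)
    (hdvd : p ^ (e - l) + 1 ∣ p ^ e - 1)
    (β : ℕ) (hβ : β = (p ^ e - 1) / (p ^ (e - l) + 1)) (hβ1 : 1 < β)
    (C : Submodule (RR F) (Fin n → RR F)) :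
    ∃ α : Fin n → RR F, (∀ j, IsUnit (α j)) ∧
      scaleCode α (C : Set (Fin n → RR F)) ∩
        galDualR (p ^ l) (scaleCode α (C : Set (Fin n → RR F))) = {0} ∧
      Nat.card (scaleCode α (C : Set (Fin n → RR F))) = Nat.card C ∧
      ((C : Set (Fin n → RR F)) ≠ {0} →
        dLee (scaleCode α (C : Set (Fin n → RR F))) = dLee (C : Set (Fin n → RR F))) :=
  statement16_general hp hle F hcard hdvd β hβ hβ1 C
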